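/- Let G be a loopless multigraph on n ≥ 2 vertices with maximum degree Δ ≥ 1, and let S and Z be disjoint subsets of the vertex set such that (i) every vertex v ∈ Z satisfies n·d(v) ≥ (n−1)·Δ, and (ii) every edge incident to a vertex of Z has its other endpoint in S, i.e., w(v,u) = 0 whenever v ∈ Z and u ∉ S. Then |S| ≥ |Z|. -/

import Mathlib

open scoped Classical

namespace NSBPaper

variable {V : Type} [Fintype V] [DecidableEq V]

/-- Degree of a vertex in a loopless multigraph given by multiplicity function `w`. -/
def deg (w : V → V → ℕ) (v : V) : ℕ := ∑ u, w v u

/-- Maximum degree of the multigraph. -/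
def maxDeg (w : V → V → ℕ) : ℕ := Finset.univ.sup fun v => deg w v

/-- The support simple graph of a multigraph: `u` and `v` are adjacent iff `u ≠ v`
and there is at least one multi-edge between them. -/
def support (w : V → V → ℕ) : SimpleGraph V where
  Adj u v := u ≠ v ∧ 1 ≤ w u v ∧ 1 ≤ w v u
  symm := ⟨fun u v h => ⟨h.1.symm, h.2.2, h.2.1⟩⟩
  loopless := ⟨fun v h => h.1 rfl⟩

/-- A set of unordered pairs `M` saturates a vertex `v` if some pair of `M` contains `v`. -/
def Saturates (M : Finset (Sym2 V)) (v : V) : Prop := ∃ e ∈ M, v ∈ e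

/-- `M` is a matching of the multigraph `w`: its elements are non-loop edges of the
support, and no two distinct elements share a vertex. -/
def IsMatching (w : V → V → ℕ) (M : Finset (Sym2 V)) : Prop :=
  (∀ e ∈ M, ¬ e.IsDiag) ∧
  (∀ u v : V, s(u, v) ∈ M → 1 ≤ w u v) ∧
  (∀ e ∈ M, ∀ f ∈ M, e ≠ f → ∀ x : V, x ∈ e → x ∉ f)

/-- `M` is a maximal matching of `w`: no pair can be added keeping it a matching. -/
def IsMaximalMatching (w : V → V → ℕ) (M : Finset (Sym2 V)) : Prop :=
  IsMatching w M ∧ ∀ e : Sym2 V, e ∉ M → ¬ IsMatching w (insert e M)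

/-- Removing a matching `M` from the multigraph `w`: the multiplicity of each pair in `M`
decreases by one. -/
def removeMatching (w : V → V → ℕ) (M : Finset (Sym2 V)) : V → V → ℕ :=
  fun u v => if s(u, v) ∈ M then w u v - 1 else w u v

/-- The subgraph of `G` induced by `Z` is bipartite: there is a set `A` such that every
edge of `G` inside `Z` joins `A` to its complement. -/
def BipartiteOn (G : SimpleGraph V) (Z : Set V) : Prop :=
  ∃ A : Set V, ∀ ⦃u v : V⦄, u ∈ Z → v ∈ Z → G.Adj u v → (u ∈ A ↔ v ∉ A)

/-- The edge multiset of `w` can be partitioned into `T` matchings. -/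
def CanEvacuate (w : V → V → ℕ) (T : ℕ) : Prop :=
  ∃ M : Fin T → Finset (Sym2 V),
    (∀ j, IsMatching w (M j)) ∧
    ∀ u v : V, (Finset.univ.filter fun j => s(u, v) ∈ M j).card = w u v

/-- The vertex-weight of a matching: the sum of the weights of its saturated vertices. -/
noncomputable def matchWeight (φ : V → ℕ) (M : Finset (Sym2 V)) : ℕ :=
  ∑ v : V, if Saturates M v then φ v else 0

/-- `Rfun M k i = 1` iff vertex `i` is saturated by the matching chosen in slot `k`. -/
noncomputable def Rfun (M : ℕ → Finset (Sym2 V)) (k : ℕ) (i : V) : ℕ :=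
  if Saturates (M k) i then 1 else 0

/-- `Ufun M k i` is `R i (k-1) * R i (k-2)` if `k ≡ 2 [MOD 3]` and `R i (k-1)` otherwise,
with `R i k = 0` for `k < 0`. -/
noncomputable def Ufun (M : ℕ → Finset (Sym2 V)) (k : ℕ) (i : V) : ℕ :=
  if k = 0 then 0
  else if k % 3 = 2 then Rfun M (k - 1) i * Rfun M (k - 2) i
  else Rfun M (k - 1) i

/-- Vertex `i` is heavy in `w`: `n * d(i) ≥ (n - 1) * Δ`. -/
def Heavy (w : V → V → ℕ) (i : V) : Prop :=
  (Fintype.card V - 1) * maxDeg w ≤ Fintype.card V * deg w i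

/-- Vertex `i` is critical in `w`: its degree is the maximum degree. -/
def Critical (w : V → V → ℕ) (i : V) : Prop := deg w i = maxDeg w

/-- The NSB weight of vertex `i`, where `u i` records whether `i` received enough
service previously. -/
noncomputable def nsbWeight (w : V → V → ℕ) (u : V → ℕ) (i : V) : ℕ :=
  if Heavy w i then deg w i * (2 - u i) else deg w i

/-- The LC-NSB weight of vertex `i`. -/
noncomputable def lcnsbWeight (w : V → V → ℕ) (u : V → ℕ) (i : V) : ℕ :=
  if Critical w i then 5 - 2 * u i
  else if Heavy w i then 4 - 2 * u i
  else 1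

/-- An NSB evacuation run on the initial multigraph `w0`: in each slot `k`, a matching
`M k` of `G k` maximizing the total NSB weight of saturated vertices is removed. -/
structure NSBRun (w0 : V → V → ℕ) where
  G : ℕ → V → V → ℕ
  M : ℕ → Finset (Sym2 V)
  init : G 0 = w0
  step : ∀ k, G (k + 1) = removeMatching (G k) (M k)
  matching : ∀ k, IsMatching (G k) (M k)
  opt : ∀ k, ∀ M' : Finset (Sym2 V), IsMatching (G k) M' →
    matchWeight (nsbWeight (G k) (Ufun M k)) M' ≤ matchWeight (nsbWeight (G k) (Ufun M k)) (M k)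

/-- An LC-NSB evacuation run on the initial multigraph `w0`. -/
structure LCNSBRun (w0 : V → V → ℕ) where
  G : ℕ → V → V → ℕ
  M : ℕ → Finset (Sym2 V)
  init : G 0 = w0
  step : ∀ k, G (k + 1) = removeMatching (G k) (M k)
  matching : ∀ k, IsMatching (G k) (M k)
  opt : ∀ k, ∀ M' : Finset (Sym2 V), IsMatching (G k) M' →
    matchWeight (lcnsbWeight (G k) (Ufun M k)) M' ≤
      matchWeight (lcnsbWeight (G k) (Ufun M k)) (M k)

end NSBPaper

/-! Summing heaviness over `Z` gives `|Z| (n - 1) Δ ≤ n ∑_{v ∈ Z} d(v)`. Every edge at `Z` ends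
in `S`, so double counting bounds that sum by `∑_{u ∈ S} d(u) ≤ |S| Δ`. Cancelling `Δ ≥ 1` leaves
`|Z| (n - 1) ≤ n |S|`, which together with `|S| + |Z| ≤ n` and `n ≥ 2` forces `|Z| ≤ |S|`. -/

theorem Nat.le_of_mul_pred_le_mul_of_add_le {s z n : ℕ} (hn : 2 ≤ n) (hsz : s + z ≤ n)
    (h : z * (n - 1) ≤ n * s) : z ≤ s := by
  by_contra! hlt
  obtain ⟨m, rfl⟩ : ∃ m, n = m + 1 := ⟨n - 1, by omega⟩
  rw [Nat.add_sub_cancel] at h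
  nlinarith

namespace NSBPaper

variable {V : Type} [Fintype V]

theorem deg_le_maxDeg (w : V → V → ℕ) (v : V) : deg w v ≤ maxDeg w :=
  Finset.le_sup (Finset.mem_univ v)

theorem sum_deg_le_card_mul_maxDeg (w : V → V → ℕ) (S : Finset V) :
    ∑ u ∈ S, deg w u ≤ S.card * maxDeg w := by
  simpa using Finset.sum_le_card_nsmul S _ _ fun u _ => deg_le_maxDeg w u

theorem sum_deg_le_sum_deg_of_forall_notMem_eq_zero (w : V → V → ℕ)
    (hsymm : ∀ u v, w u v = w v u) {S Z : Finset V} (hedge : ∀ v ∈ Z, ∀ u, u ∉ S → w v u = 0) :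
    ∑ v ∈ Z, deg w v ≤ ∑ u ∈ S, deg w u :=
  calc ∑ v ∈ Z, deg w v = ∑ v ∈ Z, ∑ u ∈ S, w v u :=
        Finset.sum_congr rfl fun v hv =>
          (Finset.sum_subset (Finset.subset_univ S) fun u _ hu => hedge v hv u hu).symm
    _ = ∑ u ∈ S, ∑ v ∈ Z, w u v := by
        rw [Finset.sum_comm]
        exact Finset.sum_congr rfl fun u _ => Finset.sum_congr rfl fun v _ => hsymm v u
    _ ≤ ∑ u ∈ S, deg w u :=
        Finset.sum_le_sum fun u _ => Finset.sum_le_sum_of_subset (Finset.subset_univ Z)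

theorem card_mul_le_sum_deg_of_heavy (w : V → V → ℕ) {Z : Finset V}
    (hheavy : ∀ v ∈ Z, (Fintype.card V - 1) * maxDeg w ≤ Fintype.card V * deg w v) :
    Z.card * (Fintype.card V - 1) * maxDeg w ≤ Fintype.card V * ∑ v ∈ Z, deg w v := by
  rw [Finset.mul_sum, mul_assoc]
  simpa using Finset.card_nsmul_le_sum Z _ _ hheavy

theorem heavy_neighbors_card_general {V : Type} [Fintype V]
    (w : V → V → ℕ) (hsymm : ∀ u v, w u v = w v u)
    (hn : 2 ≤ Fintype.card V) (hΔ : 1 ≤ maxDeg w)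
    (S Z : Finset V) (hdisj : Disjoint S Z)
    (hheavy : ∀ v ∈ Z, (Fintype.card V - 1) * maxDeg w ≤ Fintype.card V * deg w v)
    (hedge : ∀ v ∈ Z, ∀ u : V, u ∉ S → w v u = 0) :
    Z.card ≤ S.card := by
  have hcount : Z.card * (Fintype.card V - 1) * maxDeg w ≤ Fintype.card V * S.card * maxDeg w :=
    calc Z.card * (Fintype.card V - 1) * maxDeg w
        ≤ Fintype.card V * ∑ v ∈ Z, deg w v := card_mul_le_sum_deg_of_heavy w hheavy
      _ ≤ Fintype.card V * (S.card * maxDeg w) := Nat.mul_le_mul_left _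
          ((sum_deg_le_sum_deg_of_forall_notMem_eq_zero w hsymm hedge).trans
            (sum_deg_le_card_mul_maxDeg w S))
      _ = Fintype.card V * S.card * maxDeg w := (mul_assoc _ _ _).symm
  have hsz : S.card + Z.card ≤ Fintype.card V := by
    rw [← Finset.card_union_of_disjoint hdisj]
    exact Finset.card_le_univ _
  exact Nat.le_of_mul_pred_le_mul_of_add_le hn hsz (Nat.le_of_mul_le_mul_right hcount hΔ)

/-- If `S` and `Z` are disjoint, every vertex of `Z` is heavy, and every
edge incident to `Z` ends in `S`, then `|S| ≥ |Z|`. -/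
theorem heavy_neighbors_card {V : Type} [Fintype V] [DecidableEq V]
    (w : V → V → ℕ) (hsymm : ∀ u v, w u v = w v u) (hloop : ∀ v, w v v = 0)
    (hn : 2 ≤ Fintype.card V) (hΔ : 1 ≤ maxDeg w)
    (S Z : Finset V) (hdisj : Disjoint S Z)
    (hheavy : ∀ v ∈ Z, (Fintype.card V - 1) * maxDeg w ≤ Fintype.card V * deg w v)
    (hedge : ∀ v ∈ Z, ∀ u : V, u ∉ S → w v u = 0) :
    Z.card ≤ S.card :=
  heavy_neighbors_card_general w hsymm hn hΔ S Z hdisj hheavy hedge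

end NSBPaper
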